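/- Let $\nu \geq 0$ and let $\beta_2 = \cosh^{-1}\left(\frac{t^2 - r_1^2 - r_2^2}{2 r_1 r_2}\right)$ for $t > r_1 + r_2 > 0$. Then for any $\epsilon > 0$, $\int_{\beta_2}^{\infty} \left[r_1^2 + r_2^2 + 2 r_1 r_2 \cosh s - t^2\right]^{-1/2} e^{-s\nu}\, ds$ is finite, and as $t \to \infty$ (with $r_1, r_2$ in a fixed compact subset of $(0,\infty)$) it is bounded by $C_\epsilon\, t^{-2\nu + \epsilon}$ for some constant $C_\epsilon$ depending on $\epsilon$ and the compact set. -/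

import Mathlib

/-!
Write the kernel as `2 r₁ r₂ (cosh s - cosh β₂)`. Since
`cosh s - cosh β = cosh β (cosh (s - β) - 1) + sinh β sinh (s - β) ≥ sinh β sinh (s - β)` and
`e^{-sν} ≤ e^{-β ν}` on `(β, ∞)`, the integrand is dominated by
`(2 r₁ r₂ sinh β₂)^{-1/2} e^{-β₂ ν} sinh (s - β₂)^{-1/2}`, a translate of `sinh u ^ (-1/2)`,
which is integrable on `(0, ∞)` (like `u^{-1/2}` at `0`, like `e^{-u/2}` at `∞`).
For `r₁, r₂ ∈ K ⊆ [m, M]` with `m > 0` and `t ≥ 3M + 1` we have `sinh β₂ ≥ 1` and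
`e^{β₂} ≥ cosh β₂ ≥ t² / (4M²)`, so the integral is `O(t^{-2ν})`.
-/

open MeasureTheory Set

/-- The inverse hyperbolic cosine, `arcosh x = log (x + √(x² - 1))`. -/
noncomputable def Real.arcosh' (x : ℝ) : ℝ := Real.log (x + Real.sqrt (x ^ 2 - 1))

open Real

theorem integrableOn_Ioi_comp_sub_right_iff {E : Type*} [NormedAddCommGroup E] (f : ℝ → E)
    (a c : ℝ) : IntegrableOn (fun x => f (x - c)) (Ioi (a + c)) ↔ IntegrableOn f (Ioi a) := by
  rw [← preimage_sub_const_Ioi]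
  exact (measurePreserving_sub_right volume c).integrableOn_comp_preimage
    (measurableEmbedding_subRight c)

theorem integral_Ioi_comp_sub_right {E : Type*} [NormedAddCommGroup E] [NormedSpace ℝ E]
    (f : ℝ → E) (a c : ℝ) : ∫ x in Ioi (a + c), f (x - c) = ∫ x in Ioi a, f x := by
  rw [← preimage_sub_const_Ioi]
  exact (measurePreserving_sub_right volume c).setIntegral_preimage_emb
    (measurableEmbedding_subRight c) f _

theorem exp_div_four_le_sinh {u : ℝ} (hu : 1 ≤ u) : exp u / 4 ≤ sinh u := by
  have h2 : 2 ≤ exp u := by linarith [add_one_le_exp u]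
  have h1 : exp (-u) ≤ 1 := exp_le_one_iff.2 (by linarith)
  rw [sinh_eq]
  linarith

theorem integrableOn_sinh_rpow_neg {p : ℝ} (hp₀ : 0 < p) (hp₁ : p < 1) :
    IntegrableOn (fun u => sinh u ^ (-p)) (Ioi 0) := by
  have hmeas : AEStronglyMeasurable (fun u => sinh u ^ (-p)) :=
    (continuous_sinh.measurable.pow_const _).aestronglyMeasurable
  rw [← Ioc_union_Ioi_eq_Ioi zero_le_one, integrableOn_union]
  constructor
  · have hdom : IntegrableOn (fun u : ℝ => u ^ (-p)) (Ioc 0 1) := by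
      rw [integrableOn_Ioc_iff_integrableOn_Ioo,
        intervalIntegral.integrableOn_Ioo_rpow_iff one_pos]
      linarith
    refine hdom.mono' hmeas.restrict (ae_restrict_of_forall_mem measurableSet_Ioc fun u hu => ?_)
    have hsinh : 0 ≤ sinh u := sinh_nonneg_iff.2 hu.1.le
    rw [norm_of_nonneg (rpow_nonneg hsinh _)]
    exact rpow_le_rpow_of_nonpos hu.1 (self_le_sinh_iff.2 hu.1.le) (by linarith)
  · have hdom : IntegrableOn (fun u => 4 ^ p * exp (-p * u)) (Ioi 1) :=
      (exp_neg_integrableOn_Ioi 1 hp₀).const_mul _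
    refine hdom.mono' hmeas.restrict (ae_restrict_of_forall_mem measurableSet_Ioi fun u hu => ?_)
    have hlow := exp_div_four_le_sinh (le_of_lt hu)
    rw [norm_of_nonneg (rpow_nonneg (by linarith [exp_pos u]) _)]
    calc sinh u ^ (-p) ≤ (exp u / 4) ^ (-p) :=
          rpow_le_rpow_of_nonpos (by positivity) hlow (by linarith)
      _ = 4 ^ p * exp (-p * u) := by
          rw [div_rpow (exp_pos u).le (by norm_num), ← exp_mul, rpow_neg (by norm_num),
            div_inv_eq_mul]
          ring_nf

theorem sinh_mul_sinh_sub_le_cosh_sub_cosh (β s : ℝ) :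
    sinh β * sinh (s - β) ≤ cosh s - cosh β := by
  have h := cosh_add β (s - β)
  rw [add_sub_cancel] at h
  nlinarith [one_le_cosh (s - β), cosh_pos β]

section CoshKernel

variable {a β ν p : ℝ}

theorem rpow_cosh_sub_cosh_mul_exp_le (ha : 0 < a) (hβ : 0 < β) (hν : 0 ≤ ν) (hp : 0 ≤ p)
    {s : ℝ} (hs : β < s) :
    (a * (cosh s - cosh β)) ^ (-p) * exp (-s * ν) ≤
      (a * sinh β) ^ (-p) * exp (-β * ν) * sinh (s - β) ^ (-p) := by
  have hcosh : (a * (cosh s - cosh β)) ^ (-p) ≤ (a * sinh β) ^ (-p) * sinh (s - β) ^ (-p) := by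
    rw [← mul_rpow (by positivity) (sinh_pos_iff.2 (sub_pos.2 hs)).le, mul_assoc]
    exact rpow_le_rpow_of_nonpos (by positivity)
      (mul_le_mul_of_nonneg_left (sinh_mul_sinh_sub_le_cosh_sub_cosh β s) ha.le) (by linarith)
  have hexp : exp (-s * ν) ≤ exp (-β * ν) := exp_le_exp.2 (by nlinarith)
  calc (a * (cosh s - cosh β)) ^ (-p) * exp (-s * ν)
      ≤ (a * sinh β) ^ (-p) * sinh (s - β) ^ (-p) * exp (-β * ν) := by gcongr
    _ = _ := by ring

theorem rpow_cosh_sub_cosh_mul_exp_nonneg (ha : 0 < a) (hβ : 0 < β) {s : ℝ} (hs : β < s) :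
    0 ≤ (a * (cosh s - cosh β)) ^ (-p) * exp (-s * ν) := by
  have hlow := sinh_mul_sinh_sub_le_cosh_sub_cosh β s
  have hsinh : 0 < sinh β * sinh (s - β) :=
    mul_pos (sinh_pos_iff.2 hβ) (sinh_pos_iff.2 (sub_pos.2 hs))
  exact mul_nonneg (rpow_nonneg (by nlinarith) _) (exp_pos _).le

theorem integrableOn_sinh_sub_rpow_neg (hp₀ : 0 < p) (hp₁ : p < 1) :
    IntegrableOn (fun s => sinh (s - β) ^ (-p)) (Ioi β) := by
  simpa using (integrableOn_Ioi_comp_sub_right_iff (fun u => sinh u ^ (-p)) 0 β).2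
    (integrableOn_sinh_rpow_neg hp₀ hp₁)

theorem integrableOn_rpow_cosh_sub_cosh_mul_exp (ha : 0 < a) (hβ : 0 < β) (hν : 0 ≤ ν)
    (hp₀ : 0 < p) (hp₁ : p < 1) :
    IntegrableOn (fun s => (a * (cosh s - cosh β)) ^ (-p) * exp (-s * ν)) (Ioi β) := by
  refine ((integrableOn_sinh_sub_rpow_neg hp₀ hp₁).const_mul
    ((a * sinh β) ^ (-p) * exp (-β * ν))).mono' ?_
    (ae_restrict_of_forall_mem measurableSet_Ioi fun s hs => ?_)
  · exact (((continuous_const.mul (continuous_cosh.sub continuous_const)).measurable.pow_const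
      _).mul (by fun_prop)).aestronglyMeasurable
  · rw [norm_of_nonneg (rpow_cosh_sub_cosh_mul_exp_nonneg ha hβ hs)]
    exact rpow_cosh_sub_cosh_mul_exp_le ha hβ hν hp₀.le hs

theorem integral_rpow_cosh_sub_cosh_mul_exp_le (ha : 0 < a) (hβ : 0 < β) (hν : 0 ≤ ν)
    (hp₀ : 0 < p) (hp₁ : p < 1) :
    ∫ s in Ioi β, (a * (cosh s - cosh β)) ^ (-p) * exp (-s * ν) ≤
      (a * sinh β) ^ (-p) * exp (-β * ν) * ∫ u in Ioi 0, sinh u ^ (-p) := by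
  calc ∫ s in Ioi β, (a * (cosh s - cosh β)) ^ (-p) * exp (-s * ν)
      ≤ ∫ s in Ioi β, (a * sinh β) ^ (-p) * exp (-β * ν) * sinh (s - β) ^ (-p) :=
        setIntegral_mono_on (integrableOn_rpow_cosh_sub_cosh_mul_exp ha hβ hν hp₀ hp₁)
          ((integrableOn_sinh_sub_rpow_neg hp₀ hp₁).const_mul _) measurableSet_Ioi
          fun s hs => rpow_cosh_sub_cosh_mul_exp_le ha hβ hν hp₀.le hs
    _ = _ := by
        rw [integral_const_mul, ← integral_Ioi_comp_sub_right _ 0 β, zero_add]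

end CoshKernel

theorem Real.arcosh'_eq_arcosh : Real.arcosh' = Real.arcosh := rfl

theorem exp_neg_arcosh_mul_le {x ν : ℝ} (hx : 1 ≤ x) (hν : 0 ≤ ν) :
    exp (-arcosh x * ν) ≤ x ^ (-ν) := by
  rw [neg_mul, ← mul_neg, exp_mul, exp_arcosh hx]
  exact rpow_le_rpow_of_nonpos (by linarith) (le_add_of_nonneg_right (sqrt_nonneg _))
    (by linarith)

theorem one_le_sinh_arcosh {x : ℝ} (hx : 1 ≤ x) (hx₂ : 2 ≤ x ^ 2) : 1 ≤ sinh (arcosh x) := by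
  rw [sinh_arcosh hx, one_le_sqrt]
  linarith

theorem rpow_neg_le_of_mul_sq_le {c t x ν : ℝ} (hc : 0 < c) (ht : 0 < t) (hν : 0 ≤ ν)
    (h : c * t ^ 2 ≤ x) : x ^ (-ν) ≤ c ^ (-ν) * t ^ (-2 * ν) := by
  calc x ^ (-ν) ≤ (c * t ^ 2) ^ (-ν) := rpow_le_rpow_of_nonpos (by positivity) h (by linarith)
    _ = c ^ (-ν) * t ^ (-2 * ν) := by
      rw [mul_rpow hc.le (by positivity), ← rpow_natCast, ← rpow_mul ht.le]
      norm_num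

section ThirdBranch

variable {r₁ r₂ t : ℝ}

theorem one_lt_sq_sub_sq_sub_sq_div (hr₁ : 0 < r₁) (hr₂ : 0 < r₂) (ht : r₁ + r₂ < t) :
    1 < (t ^ 2 - r₁ ^ 2 - r₂ ^ 2) / (2 * r₁ * r₂) := by
  rw [one_lt_div (by positivity)]
  nlinarith

theorem inv_mul_sq_le_sq_sub_sq_sub_sq_div {M : ℝ} (hr₁ : 0 < r₁) (hr₂ : 0 < r₂) (h₁ : r₁ ≤ M)
    (h₂ : r₂ ≤ M) (ht : 2 * M ≤ t) :
    (4 * M ^ 2)⁻¹ * t ^ 2 ≤ (t ^ 2 - r₁ ^ 2 - r₂ ^ 2) / (2 * r₁ * r₂) := by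
  rw [inv_mul_eq_div, div_le_div_iff₀ (by nlinarith) (by positivity)]
  have hsq : r₁ ^ 2 + r₂ ^ 2 ≤ 2 * M ^ 2 := by nlinarith
  have hprod : r₁ * r₂ ≤ M ^ 2 := by nlinarith
  have ht₂ : 4 * M ^ 2 ≤ t ^ 2 := by nlinarith
  nlinarith [mul_le_mul_of_nonneg_left hprod (sq_nonneg t),
    mul_le_mul_of_nonneg_left hsq (sq_nonneg M), mul_le_mul_of_nonneg_left ht₂ (sq_nonneg M)]

theorem sq_add_sq_add_mul_cosh_sub_sq_eq (hr₁ : 0 < r₁) (hr₂ : 0 < r₂) (ht : r₁ + r₂ < t)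
    (s : ℝ) :
    r₁ ^ 2 + r₂ ^ 2 + 2 * r₁ * r₂ * cosh s - t ^ 2 =
      2 * r₁ * r₂ * (cosh s - cosh (arcosh ((t ^ 2 - r₁ ^ 2 - r₂ ^ 2) / (2 * r₁ * r₂)))) := by
  rw [cosh_arcosh (one_lt_sq_sub_sq_sub_sq_div hr₁ hr₂ ht).le]
  field_simp
  ring

end ThirdBranch

theorem third_branch_prefactor_le {r₁ r₂ t m M ν p : ℝ} (hm : 0 < m) (hr₁ : r₁ ∈ Icc m M)
    (hr₂ : r₂ ∈ Icc m M) (ht : 3 * M ≤ t) (hν : 0 ≤ ν) (hp : 0 ≤ p) :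
    (2 * r₁ * r₂ * sinh (arcosh ((t ^ 2 - r₁ ^ 2 - r₂ ^ 2) / (2 * r₁ * r₂)))) ^ (-p) *
        exp (-arcosh ((t ^ 2 - r₁ ^ 2 - r₂ ^ 2) / (2 * r₁ * r₂)) * ν) ≤
      (2 * m ^ 2) ^ (-p) * ((4 * M ^ 2)⁻¹ ^ (-ν) * t ^ (-2 * ν)) := by
  obtain ⟨hm₁, hM₁⟩ := hr₁
  obtain ⟨hm₂, hM₂⟩ := hr₂
  have hM : 0 < M := by linarith
  set x := (t ^ 2 - r₁ ^ 2 - r₂ ^ 2) / (2 * r₁ * r₂)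
  have hx : (4 * M ^ 2)⁻¹ * t ^ 2 ≤ x :=
    inv_mul_sq_le_sq_sub_sq_sub_sq_div (by linarith) (by linarith) hM₁ hM₂ (by linarith)
  have hx₂ : 2 ≤ (4 * M ^ 2)⁻¹ * t ^ 2 := by
    rw [inv_mul_eq_div, le_div_iff₀ (by positivity)]
    nlinarith
  have hsinh : 1 ≤ sinh (arcosh x) := one_le_sinh_arcosh (by linarith) (by nlinarith)
  have hbase : 2 * m ^ 2 ≤ 2 * r₁ * r₂ * sinh (arcosh x) := by
    have : m ^ 2 ≤ r₁ * r₂ := by nlinarith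
    nlinarith
  exact mul_le_mul (rpow_le_rpow_of_nonpos (by positivity) hbase (by linarith))
    ((exp_neg_arcosh_mul_le (by linarith) hν).trans
      (rpow_neg_le_of_mul_sq_le (by positivity) (by linarith) hν hx))
    (exp_pos _).le (by positivity)

/-- Local decay estimate for the third branch of the fundamental solution: with
`β₂ = arcosh((t² - r₁² - r₂²)/(2 r₁ r₂))` for `t > r₁ + r₂`, the integral
`∫_{β₂}^∞ (r₁² + r₂² + 2 r₁ r₂ cosh s - t²)^{-1/2} e^{-sν} ds` is finite, and for
`r₁, r₂` in a fixed compact subset of `(0,∞)` and any `ε > 0` it is bounded by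
`C_ε t^{-2ν+ε}` for large `t`. -/
theorem third_branch_local_decay (ν : ℝ) (hν : 0 ≤ ν)
    (K : Set ℝ) (hK : IsCompact K) (hKpos : K ⊆ Ioi 0) :
    ∀ ε > (0 : ℝ), ∃ C T₀ : ℝ, ∀ r₁ ∈ K, ∀ r₂ ∈ K, ∀ t : ℝ, r₁ + r₂ < t →
      IntegrableOn
        (fun s : ℝ => (r₁ ^ 2 + r₂ ^ 2 + 2 * r₁ * r₂ * Real.cosh s - t ^ 2) ^ (-(1 / 2) : ℝ) *
          Real.exp (-s * ν))
        (Ioi (Real.arcosh' ((t ^ 2 - r₁ ^ 2 - r₂ ^ 2) / (2 * r₁ * r₂)))) ∧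
      (T₀ ≤ t →
        ∫ s in Ioi (Real.arcosh' ((t ^ 2 - r₁ ^ 2 - r₂ ^ 2) / (2 * r₁ * r₂))),
            (r₁ ^ 2 + r₂ ^ 2 + 2 * r₁ * r₂ * Real.cosh s - t ^ 2) ^ (-(1 / 2) : ℝ) *
              Real.exp (-s * ν) ≤
          C * t ^ (-2 * ν + ε)) := by
  intro ε hε
  rcases K.eq_empty_or_nonempty with rfl | hKne
  · exact ⟨0, 0, by simp⟩
  obtain ⟨m, hmK, hm⟩ := hK.exists_isLeast hKne
  obtain ⟨M, hMK, hM⟩ := hK.exists_isGreatest hKne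
  set I := ∫ u in Ioi 0, sinh u ^ (-(1 / 2) : ℝ)
  refine ⟨(2 * m ^ 2) ^ (-(1 / 2) : ℝ) * (4 * M ^ 2)⁻¹ ^ (-ν) * I, 3 * M + 1,
    fun r₁ hr₁ r₂ hr₂ t ht => ?_⟩
  have hM₀ : 0 < M := hKpos hMK
  have hr₁pos : 0 < r₁ := hKpos hr₁
  have hr₂pos : 0 < r₂ := hKpos hr₂
  have hx := one_lt_sq_sub_sq_sub_sq_div hr₁pos hr₂pos ht
  simp only [sq_add_sq_add_mul_cosh_sub_sq_eq hr₁pos hr₂pos ht, Real.arcosh'_eq_arcosh]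
  have ha : 0 < 2 * r₁ * r₂ := by positivity
  refine ⟨integrableOn_rpow_cosh_sub_cosh_mul_exp ha (arcosh_pos hx) hν (by norm_num)
    (by norm_num), fun hT => ?_⟩
  have hI : 0 ≤ I := setIntegral_nonneg measurableSet_Ioi fun u hu =>
    rpow_nonneg (sinh_nonneg_iff.2 (le_of_lt hu)) _
  calc _ ≤ _ := integral_rpow_cosh_sub_cosh_mul_exp_le ha (arcosh_pos hx) hν (by norm_num)
        (by norm_num)
    _ ≤ (2 * m ^ 2) ^ (-(1 / 2) : ℝ) * ((4 * M ^ 2)⁻¹ ^ (-ν) * t ^ (-2 * ν)) * I := by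
        refine mul_le_mul_of_nonneg_right ?_ hI
        exact third_branch_prefactor_le (hKpos hmK) ⟨hm hr₁, hM hr₁⟩ ⟨hm hr₂, hM hr₂⟩
          (by linarith) hν (by norm_num)
    _ ≤ (2 * m ^ 2) ^ (-(1 / 2) : ℝ) * ((4 * M ^ 2)⁻¹ ^ (-ν) * t ^ (-2 * ν + ε)) * I := by
        have hdecay : t ^ (-2 * ν) ≤ t ^ (-2 * ν + ε) :=
          rpow_le_rpow_of_exponent_le (by linarith) (by linarith)
        gcongr
    _ = _ := by ring
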